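/- arXiv:2601.09308 — 8 statements merged into one kernel-verified Lean document; each statement's English description precedes it below -/
import Mathlib

section
/- Let α be a type and let S be a finite family of finsets of α that is closed under intersection, contains the empty set, and forms a lattice under the inclusion ordering in which the meet X ⊓ Y equals the intersection X ∩ Y. If cardinality is modular on S, i.e. |X| + |Y| = |X ∩ Y| + |X ⊔ Y| for all X, Y ∈ S (where ⊔ is the lattice join in S), then X ⊔ Y = X ∪ Y for all X, Y ∈ S; consequently S is a sublattice of the powerset lattice and hence distributive. -/
/-- If a finite family `S` of finsets, closed under intersection and containing `∅`,
forms a lattice under inclusion with meet given by intersection, and cardinality is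
modular on `S` (with respect to the lattice join `j`), then the join coincides with
the union. -/
theorem join_eq_union_of_card_modular
    {α : Type*} [DecidableEq α] (S : Set (Finset α)) (hfin : S.Finite)
    (hempty : ∅ ∈ S)
    (hinter : ∀ X ∈ S, ∀ Y ∈ S, X ∩ Y ∈ S)
    (j : Finset α → Finset α → Finset α)
    (hj_mem : ∀ X ∈ S, ∀ Y ∈ S, j X Y ∈ S)
    (hj_le_left : ∀ X ∈ S, ∀ Y ∈ S, X ⊆ j X Y)
    (hj_le_right : ∀ X ∈ S, ∀ Y ∈ S, Y ⊆ j X Y)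
    (hj_least : ∀ X ∈ S, ∀ Y ∈ S, ∀ W ∈ S, X ⊆ W → Y ⊆ W → j X Y ⊆ W)
    (hmod : ∀ X ∈ S, ∀ Y ∈ S, X.card + Y.card = (X ∩ Y).card + (j X Y).card) :
    ∀ X ∈ S, ∀ Y ∈ S, j X Y = X ∪ Y := by
  intro X hX Y hY
  have hsub : X ∪ Y ⊆ j X Y :=
    Finset.union_subset (hj_le_left X hX Y hY) (hj_le_right X hX Y hY)
  have hcard : (j X Y).card ≤ (X ∪ Y).card := by
    have h1 := hmod X hX Y hY
    have h2 := Finset.card_union_add_card_inter X Y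
    omega
  exact ((Finset.eq_of_subset_of_card_le hsub hcard)).symm
end

section
/- Let L be a finite distributive lattice. For every maximal chain ⊥ = m_0 ⋖ m_1 ⋖ ⋯ ⋖ m_r = ⊤ in L there exists a sequence of join-irreducible elements j_1, j_2, …, j_r of L such that for every i ∈ {1, …, r}: m_{i−1} ⊔ j_i = m_i and m_{i−1} ⊓ j_i = j_i⁻, where j_i⁻ denotes the unique element of L covered by j_i. -/
/-! For a cover `a ⋖ b`, take `j ≤ b` minimal among the elements not below `a`. Everything strictly
below `j` lies below `a`, so `j` is join-irreducible and `a ⊓ j` is the element it covers, while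
`a < a ⊔ j ≤ b` forces `a ⊔ j = b`. Finiteness is only needed for the minimal element to exist. -/

section Lattice

variable {α : Type*} [Lattice α] {a b j : α}

lemma supIrred_of_minimal_not_le (hj : Minimal (¬ · ≤ a) j) : SupIrred j := by
  have below : ∀ ⦃x⦄, x < j → x ≤ a := fun x hx => not_not.1 (hj.not_lt · hx)
  refine ⟨fun hmin => hj.prop ((hmin inf_le_right).trans inf_le_left), fun u v huv => ?_⟩
  by_contra! hne
  have hu : u < j := lt_of_le_of_ne (huv ▸ le_sup_left) hne.1
  have hv : v < j := lt_of_le_of_ne (huv ▸ le_sup_right) hne.2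
  exact hj.prop (huv ▸ sup_le (below hu) (below hv))

lemma inf_covBy_of_minimal_not_le (hj : Minimal (¬ · ≤ a) j) : a ⊓ j ⋖ j :=
  ⟨inf_lt_right.2 hj.prop, fun _ hax hxj =>
    hj.not_lt (fun hxa => hax.not_ge (le_inf hxa hxj.le)) hxj⟩

lemma CovBy.exists_supIrred_sup_eq_inf_covBy [WellFoundedLT α] (hab : a ⋖ b) :
    ∃ j, SupIrred j ∧ a ⊔ j = b ∧ a ⊓ j ⋖ j := by
  obtain ⟨j, hjb, hj⟩ := exists_minimal_le_of_wellFoundedLT (¬ · ≤ a) b hab.lt.not_ge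
  have hlt : a < a ⊔ j := left_lt_sup.2 hj.prop
  refine ⟨j, supIrred_of_minimal_not_le hj, ?_, inf_covBy_of_minimal_not_le hj⟩
  exact (sup_le hab.le hjb).eq_of_not_lt (hab.2 hlt)

end Lattice

theorem maximal_chain_join_irreducibles_general
    {L : Type*} [DistribLattice L] [Fintype L]
    (r : ℕ) (m : Fin (r + 1) → L)
    (hcov : ∀ i : Fin r, m i.castSucc ⋖ m i.succ) :
    ∃ j : Fin r → L, ∀ i : Fin r,
      SupIrred (j i) ∧ m i.castSucc ⊔ j i = m i.succ ∧ (m i.castSucc ⊓ j i) ⋖ j i :=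
  ⟨fun i => (hcov i).exists_supIrred_sup_eq_inf_covBy.choose,
    fun i => (hcov i).exists_supIrred_sup_eq_inf_covBy.choose_spec⟩

/-- In a finite distributive lattice, for every maximal chain
`⊥ = m 0 ⋖ m 1 ⋖ ⋯ ⋖ m r = ⊤` there is a sequence of join-irreducible elements
`j 1, …, j r` such that `m (i-1) ⊔ j i = m i` and `m (i-1) ⊓ j i` is the (unique)
element covered by `j i`. -/
theorem maximal_chain_join_irreducibles
    {L : Type*} [DistribLattice L] [Fintype L] [BoundedOrder L]
    (r : ℕ) (m : Fin (r + 1) → L)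
    (h0 : m 0 = ⊥) (htop : m (Fin.last r) = ⊤)
    (hcov : ∀ i : Fin r, m i.castSucc ⋖ m i.succ) :
    ∃ j : Fin r → L, ∀ i : Fin r,
      SupIrred (j i) ∧ m i.castSucc ⊔ j i = m i.succ ∧ (m i.castSucc ⊓ j i) ⋖ j i :=
  maximal_chain_join_irreducibles_general r m hcov
end

section
/- Let L be a finite lattice with least element ⊥ and greatest element ⊤, and let μ, ν : L → ℝ be valuations with ν strictly monotone and μ monotone. Then any two maximal chains from ⊥ to ⊤ have the same divergence: for any two maximal chains ⊥ = m_0 ⋖ ⋯ ⋖ m_r = ⊤ and ⊥ = m'_0 ⋖ ⋯ ⋖ m'_s = ⊤, one has ∑_{i=1}^r f(Δμ_i/Δν_i)·Δν_i = ∑_{i=1}^s f(Δμ'_i/Δν'_i)·Δν'_i. -/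
/-!
A strictly monotone modular function forces the lattice to be modular, so the Jordan–Hölder
theorem applies: two maximal chains from `⊥` to `⊤` have their covering steps matched by a
bijection under which matched steps are projective intervals. A modular function takes the same
increment `ν b - ν a` on projective intervals `[a, b]`, so matched steps contribute equal terms
`f(Δμ/Δν)·Δν` to the two divergences.
-/

/-- The function `f(x) = x·ln x − (x − 1)` (note `f 0 = 1` since `Real.log 0 = 0`). -/
noncomputable def divF (x : ℝ) : ℝ := x * Real.log x - (x - 1)

theorem StrictMono.isModularLattice {L G : Type*} [Lattice L] [AddCommGroup G] [Preorder G]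
    {ν : L → G} (hν : StrictMono ν) (hmod : ∀ a b, ν a + ν b = ν (a ⊓ b) + ν (a ⊔ b)) :
    IsModularLattice L where
  sup_inf_le_assoc_of_le {a} b {c} hac := by
    have hle : a ⊔ b ⊓ c ≤ (a ⊔ b) ⊓ c :=
      le_inf (sup_le_sup_left inf_le_left a) (sup_le hac inf_le_right)
    have hν_eq : ν (a ⊔ b ⊓ c) = ν ((a ⊔ b) ⊓ c) := by
      have h₁ := hmod (a ⊔ b) c
      have h₂ := hmod a (b ⊓ c)
      have h₃ := hmod a b
      have h₄ := hmod b c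
      rw [sup_right_comm, sup_of_le_right hac, sup_comm c b] at h₁
      rw [← inf_assoc, inf_right_comm, inf_of_le_left hac] at h₂
      linear_combination (norm := abel) h₁ - h₂ + h₃ - h₄
    exact (hle.eq_or_lt.resolve_right fun h ↦ (hν h).ne hν_eq).ge

section

variable {X : Type*} [Lattice X] [JordanHolderLattice X]

open JordanHolderLattice

theorem JordanHolderLattice.Iso.sub_eq_sub {G : Type*} [AddCommGroup G] {ν : X → G}
    (hmod : ∀ a b, ν a + ν b = ν (a ⊓ b) + ν (a ⊔ b)) {p q : X × X} (h : Iso p q) :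
    ν p.2 - ν p.1 = ν q.2 - ν q.1 :=
  Iso.rel (fun p q ↦ ν p.2 - ν p.1 = ν q.2 - ν q.1) rfl Eq.symm Eq.trans
    (fun {x y} _ ↦ sub_eq_sub_iff_add_eq_add.mpr <|
      (add_comm _ _).trans ((hmod x y).symm.trans (add_comm _ _))) h

theorem CompositionSeries.Equivalent.sum_eq {M : Type*} [AddCommMonoid M]
    {s₁ s₂ : CompositionSeries X} (h : s₁.Equivalent s₂) (F : X × X → M)
    (hF : ∀ {p q}, Iso p q → F p = F q) :
    ∑ i : Fin s₁.length, F (s₁ i.castSucc, s₁ i.succ) =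
      ∑ i : Fin s₂.length, F (s₂ i.castSucc, s₂ i.succ) := by
  obtain ⟨e, he⟩ := h
  exact Fintype.sum_equiv e _ _ fun i ↦ hF (he i)

end

theorem maximal_chains_same_divergence_general
    {L : Type*} [Lattice L] [BoundedOrder L]
    (μ ν : L → ℝ)
    (hμmod : ∀ a b : L, μ a + μ b = μ (a ⊓ b) + μ (a ⊔ b))
    (hνsm : StrictMono ν)
    (hνmod : ∀ a b : L, ν a + ν b = ν (a ⊓ b) + ν (a ⊔ b))
    (r s : ℕ) (m : Fin (r + 1) → L) (m' : Fin (s + 1) → L)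
    (hm0 : m 0 = ⊥) (hmtop : m (Fin.last r) = ⊤)
    (hmcov : ∀ i : Fin r, m i.castSucc ⋖ m i.succ)
    (hm'0 : m' 0 = ⊥) (hm'top : m' (Fin.last s) = ⊤)
    (hm'cov : ∀ i : Fin s, m' i.castSucc ⋖ m' i.succ) :
    ∑ i : Fin r,
        divF ((μ (m i.succ) - μ (m i.castSucc)) / (ν (m i.succ) - ν (m i.castSucc)))
          * (ν (m i.succ) - ν (m i.castSucc))
      = ∑ i : Fin s,
          divF ((μ (m' i.succ) - μ (m' i.castSucc)) / (ν (m' i.succ) - ν (m' i.castSucc)))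
            * (ν (m' i.succ) - ν (m' i.castSucc)) := by
  have := hνsm.isModularLattice hνmod
  let s₁ : CompositionSeries L := ⟨r, m, hmcov⟩
  let s₂ : CompositionSeries L := ⟨s, m', hm'cov⟩
  have hequiv : s₁.Equivalent s₂ :=
    CompositionSeries.jordan_holder s₁ s₂ (hm0.trans hm'0.symm) (hmtop.trans hm'top.symm)
  refine hequiv.sum_eq
    (fun p ↦ divF ((μ p.2 - μ p.1) / (ν p.2 - ν p.1)) * (ν p.2 - ν p.1)) fun hpq ↦ ?_
  rw [hpq.sub_eq_sub hμmod, hpq.sub_eq_sub hνmod]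

/-- In a finite lattice with valuations `μ` (monotone) and `ν` (strictly monotone),
any two maximal chains from `⊥` to `⊤` have the same information divergence. -/
theorem maximal_chains_same_divergence
    {L : Type*} [Lattice L] [Fintype L] [BoundedOrder L]
    (μ ν : L → ℝ)
    (hμ0 : μ ⊥ = 0) (hμmono : Monotone μ)
    (hμmod : ∀ a b : L, μ a + μ b = μ (a ⊓ b) + μ (a ⊔ b))
    (hν0 : ν ⊥ = 0) (hνsm : StrictMono ν)
    (hνmod : ∀ a b : L, ν a + ν b = ν (a ⊓ b) + ν (a ⊔ b))
    (r s : ℕ) (m : Fin (r + 1) → L) (m' : Fin (s + 1) → L)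
    (hm0 : m 0 = ⊥) (hmtop : m (Fin.last r) = ⊤)
    (hmcov : ∀ i : Fin r, m i.castSucc ⋖ m i.succ)
    (hm'0 : m' 0 = ⊥) (hm'top : m' (Fin.last s) = ⊤)
    (hm'cov : ∀ i : Fin s, m' i.castSucc ⋖ m' i.succ) :
    ∑ i : Fin r,
        divF ((μ (m i.succ) - μ (m i.castSucc)) / (ν (m i.succ) - ν (m i.castSucc)))
          * (ν (m i.succ) - ν (m i.castSucc))
      = ∑ i : Fin s,
          divF ((μ (m' i.succ) - μ (m' i.castSucc)) / (ν (m' i.succ) - ν (m' i.castSucc)))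
            * (ν (m' i.succ) - ν (m' i.castSucc)) :=
  maximal_chains_same_divergence_general μ ν hμmod hνsm hνmod r s m m' hm0 hmtop hmcov hm'0 hm'top
    hm'cov
end

section
/- Let L be a finite distributive lattice with least element ⊥ and greatest element ⊤, and let μ, ν : L → ℝ be valuations with ν strictly monotone and μ monotone. Then for every maximal chain ⊥ = m_0 ⋖ m_1 ⋖ ⋯ ⋖ m_r = ⊤ in L, the divergence of the chain equals the sum over all join-irreducible elements j of L of f(Δμ(j)/Δν(j))·Δν(j), where Δμ(j) = μ(j) − μ(j⁻), Δν(j) = ν(j) − ν(j⁻), and j⁻ is the unique element covered by j. -/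
section Lattice

variable {L : Type*}

theorem exists_supIrred_le_not_le [SemilatticeSup L] [OrderBot L] [WellFoundedLT L] {a b : L}
    (h : ¬ b ≤ a) : ∃ j, SupIrred j ∧ j ≤ b ∧ ¬ j ≤ a := by
  obtain ⟨s, rfl, hs⟩ := exists_supIrred_decomposition b
  by_contra! hle
  exact h (Finset.sup_le fun j hj => hle j (hs hj) (Finset.le_sup (f := id) hj))

variable {a b j k : L}

theorem CovBy.sup_eq_of_le_of_not_le [SemilatticeSup L] (hab : a ⋖ b) (hjb : j ≤ b)
    (hja : ¬ j ≤ a) : a ⊔ j = b :=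
  (hab.eq_or_eq le_sup_left (sup_le hab.le hjb)).resolve_left
    fun h => hja (le_sup_right.trans h.le)

theorem CovBy.inf_covBy_of_le_of_not_le [Lattice L] [IsLowerModularLattice L] (hab : a ⋖ b)
    (hjb : j ≤ b) (hja : ¬ j ≤ a) : a ⊓ j ⋖ j :=
  inf_covBy_of_covBy_sup_left (hab.sup_eq_of_le_of_not_le hjb hja ▸ hab)

theorem CovBy.sub_eq_sub_inf_of_modular [Lattice L] {G : Type*} [AddCommGroup G] {μ : L → G}
    (hμ : ∀ a b, μ a + μ b = μ (a ⊓ b) + μ (a ⊔ b)) (hab : a ⋖ b) (hjb : j ≤ b)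
    (hja : ¬ j ≤ a) : μ b - μ a = μ j - μ (a ⊓ j) := by
  rw [← hab.sup_eq_of_le_of_not_le hjb hja, sub_eq_sub_iff_add_eq_add, add_comm, ← hμ,
    add_comm]

theorem SupIrred.le_of_covBy [DistribLattice L] (hj : SupIrred j) (hab : a ⋖ b) (hjb : j ≤ b)
    (hja : ¬ j ≤ a) (hkb : k ≤ b) (hka : ¬ k ≤ a) : j ≤ k := by
  rw [← hab.sup_eq_of_le_of_not_le hkb hka, (supPrime_iff_supIrred.2 hj).le_sup] at hjb
  exact hjb.resolve_left hja

theorem SupIrred.eq_of_covBy [DistribLattice L] (hj : SupIrred j) (hk : SupIrred k)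
    (hab : a ⋖ b) (hjb : j ≤ b) (hja : ¬ j ≤ a) (hkb : k ≤ b) (hka : ¬ k ≤ a) : j = k :=
  le_antisymm (hj.le_of_covBy hab hjb hja hkb hka) (hk.le_of_covBy hab hkb hka hjb hja)

end Lattice

namespace Fin

variable {r : ℕ}

theorem exists_not_castSucc_and_succ {P : Fin (r + 1) → Prop} (h0 : ¬ P 0)
    (hlast : P (last r)) : ∃ i : Fin r, ¬ P i.castSucc ∧ P i.succ := by
  by_contra! h
  exact Fin.induction h0 h (last r) hlast

theorem injective_of_le_succ_of_not_le_castSucc {α : Type*} [Preorder α]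
    {m : Fin (r + 1) → α} {J : Fin r → α} (hm : Monotone m) (hJs : ∀ i, J i ≤ m i.succ)
    (hJc : ∀ i, ¬ J i ≤ m i.castSucc) : Function.Injective J := by
  have hne : ∀ {i i'}, i < i' → J i ≠ J i' := fun hlt hE =>
    hJc _ (hE ▸ (hJs _).trans (hm (succ_le_castSucc_iff.2 hlt)))
  exact fun i i' hE => le_antisymm (not_lt.1 fun h => hne h hE.symm) (not_lt.1 fun h => hne h hE)

end Fin

open Classical in
theorem chain_divergence_eq_sum_over_irreducibles_general
    {L : Type*} [DistribLattice L] [Fintype L] [BoundedOrder L]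
    (μ ν : L → ℝ)
    (hμmod : ∀ a b : L, μ a + μ b = μ (a ⊓ b) + μ (a ⊔ b))
    (hνmod : ∀ a b : L, ν a + ν b = ν (a ⊓ b) + ν (a ⊔ b))
    (p : L → L)
    (hp : ∀ j : L, SupIrred j → p j ⋖ j ∧ ∀ a : L, a ⋖ j → a = p j)
    (r : ℕ) (m : Fin (r + 1) → L)
    (hm0 : m 0 = ⊥) (hmtop : m (Fin.last r) = ⊤)
    (hmcov : ∀ i : Fin r, m i.castSucc ⋖ m i.succ) :
    ∑ i : Fin r,
        divF ((μ (m i.succ) - μ (m i.castSucc)) / (ν (m i.succ) - ν (m i.castSucc)))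
          * (ν (m i.succ) - ν (m i.castSucc))
      = ∑ j ∈ Finset.univ.filter (fun j : L => SupIrred j),
          divF ((μ j - μ (p j)) / (ν j - ν (p j))) * (ν j - ν (p j)) := by
  choose J hJ using fun i => exists_supIrred_le_not_le (hmcov i).lt.not_ge
  have hJinj : Function.Injective J := Fin.injective_of_le_succ_of_not_le_castSucc
    (Fin.monotone_iff_le_succ.2 fun i => (hmcov i).le) (fun i => (hJ i).2.1) (fun i => (hJ i).2.2)
  have hΔ : ∀ f : L → ℝ, (∀ a b, f a + f b = f (a ⊓ b) + f (a ⊔ b)) → ∀ i,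
      f (m i.succ) - f (m i.castSucc) = f (J i) - f (p (J i)) := fun f hf i => by
    rw [(hmcov i).sub_eq_sub_inf_of_modular hf (hJ i).2.1 (hJ i).2.2,
      (hp _ (hJ i).1).2 _ ((hmcov i).inf_covBy_of_le_of_not_le (hJ i).2.1 (hJ i).2.2)]
  refine Finset.sum_bij (fun i _ => J i) (fun i _ => by simpa using (hJ i).1)
    (fun i _ i' _ hE => hJinj hE) (fun j hj => ?_) (fun i _ => by rw [hΔ μ hμmod, hΔ ν hνmod])
  rw [Finset.mem_filter] at hj
  obtain ⟨i, hi, hi'⟩ := Fin.exists_not_castSucc_and_succ (P := fun k => j ≤ m k)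
    (by simpa [hm0] using hj.2.ne_bot) (by simp [hmtop])
  exact ⟨i, Finset.mem_univ i, (hJ i).1.eq_of_covBy hj.2 (hmcov i) (hJ i).2.1 (hJ i).2.2 hi' hi⟩

open Classical in
/-- In a finite distributive lattice with valuations `μ` (monotone) and `ν` (strictly
monotone), the divergence of any maximal chain equals the sum, over all
join-irreducible elements `j`, of `f(Δμ(j)/Δν(j))·Δν(j)`, where `Δμ(j) = μ j − μ j⁻`
and `j⁻` (given by the function `p`) is the unique element covered by `j`. -/
theorem chain_divergence_eq_sum_over_irreducibles
    {L : Type*} [DistribLattice L] [Fintype L] [BoundedOrder L]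
    (μ ν : L → ℝ)
    (hμ0 : μ ⊥ = 0) (hμmono : Monotone μ)
    (hμmod : ∀ a b : L, μ a + μ b = μ (a ⊓ b) + μ (a ⊔ b))
    (hν0 : ν ⊥ = 0) (hνsm : StrictMono ν)
    (hνmod : ∀ a b : L, ν a + ν b = ν (a ⊓ b) + ν (a ⊔ b))
    (p : L → L)
    (hp : ∀ j : L, SupIrred j → p j ⋖ j ∧ ∀ a : L, a ⋖ j → a = p j)
    (r : ℕ) (m : Fin (r + 1) → L)
    (hm0 : m 0 = ⊥) (hmtop : m (Fin.last r) = ⊤)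
    (hmcov : ∀ i : Fin r, m i.castSucc ⋖ m i.succ) :
    ∑ i : Fin r,
        divF ((μ (m i.succ) - μ (m i.castSucc)) / (ν (m i.succ) - ν (m i.castSucc)))
          * (ν (m i.succ) - ν (m i.castSucc))
      = ∑ j ∈ Finset.univ.filter (fun j : L => SupIrred j),
          divF ((μ j - μ (p j)) / (ν j - ν (p j))) * (ν j - ν (p j)) :=
  chain_divergence_eq_sum_over_irreducibles_general μ ν hμmod hνmod p hp r m hm0 hmtop hmcov
end

section
/- Let ν be a finite measure on a measurable space (Ω, 𝒜), let μ = ν.withDensity ρ be a finite measure with measurable density ρ ≥ 0, let F ⊆ 𝒜 be a sub-σ-algebra, let Y be a conditional density of μ given F with respect to ν, and set μ_F := ν.withDensity Y. Then for every finite measure θ on (Ω, 𝒜) that agrees with μ on F (θ(A) = μ(A) for all A ∈ F), one has the Pythagorean identity D(θ‖ν) = D(θ‖μ_F) + D(μ_F‖ν). -/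
open MeasureTheory Filter Topology ENNReal

open Classical in
/-- Information divergence `D(μ‖ν)`: if `μ ≪ ν` it is `∫ (ρ ln ρ − ρ + 1) dν` where
`ρ` is the density of `μ` with respect to `ν`, and `∞` otherwise. -/
noncomputable def infoDiv {Ω : Type*} [MeasurableSpace Ω] (μ ν : Measure Ω) : ℝ≥0∞ :=
  if μ ≪ ν then
    ∫⁻ x, ENNReal.ofReal ((μ.rnDeriv ν x).toReal * Real.log (μ.rnDeriv ν x).toReal
      - (μ.rnDeriv ν x).toReal + 1) ∂ν
  else ∞

/-!
Write `θ = g ν` and `μ_F = Y ν`, and let `φ(t) = t log t - t + 1` (Mathlib's `klFun`).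
Where `Y > 0`, `φ(g) = Y φ(g / Y) + φ(Y) + (g - Y) log Y`; where `Y = 0` also `g = 0` almost
everywhere, since `θ {Y = 0} = μ_F {Y = 0} = 0`. As `log Y` is `F`-measurable and `θ = μ_F` on
`F`, the last term integrates to zero. To stay within `ℝ≥0∞`, `log Y` is split into its positive
and negative parts: the negative part integrates against `Y` to at most `ν(Ω)`, and if the
positive part integrates to `∞` then so do `φ(g)` and `φ(Y)`, because `u log Y ≤ φ(u) + Y`.
-/

open InformationTheory Real

lemma klFun_eq_mul_klFun_div_add {a b : ℝ} (hb : b ≠ 0) :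
    klFun a = b * klFun (a / b) + klFun b + (a - b) * log b := by
  rcases eq_or_ne a 0 with rfl | ha
  · simp [klFun]
  · simp only [klFun, log_div ha hb]
    field_simp
    ring

lemma mul_log_le_klFun_add {a b : ℝ} (ha : 0 ≤ a) (hb : 0 ≤ b) : a * log b ≤ klFun a + b := by
  rcases hb.eq_or_lt with rfl | hb
  · simpa using klFun_nonneg ha
  · have h := klFun_eq_mul_klFun_div_add (a := a) hb.ne'
    rw [klFun_apply b] at h
    linarith [mul_nonneg hb.le (klFun_nonneg (div_nonneg ha hb.le))]

lemma mul_neg_log_le_one {b : ℝ} (hb : 0 ≤ b) : b * -log b ≤ 1 := by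
  linarith [klFun_nonneg hb, klFun_apply b]

namespace ENNReal

lemma mul_ofReal_log_le {u y : ℝ≥0∞} (hu : u ≠ ∞) (hy : y ≠ ∞) :
    u * ENNReal.ofReal (Real.log y.toReal) ≤ ENNReal.ofReal (klFun u.toReal) + y := by
  rw [← ofReal_toReal hu, ← ofReal_toReal hy, ← ofReal_mul toReal_nonneg,
    ← ofReal_add (klFun_nonneg toReal_nonneg) toReal_nonneg]
  simp only [toReal_ofReal toReal_nonneg]
  exact ofReal_le_ofReal (mul_log_le_klFun_add toReal_nonneg toReal_nonneg)

lemma mul_ofReal_neg_log_le_one {y : ℝ≥0∞} (hy : y ≠ ∞) :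
    y * ENNReal.ofReal (-Real.log y.toReal) ≤ 1 := by
  rw [← ofReal_toReal hy, ← ofReal_mul toReal_nonneg, toReal_ofReal toReal_nonneg, ← ofReal_one]
  exact ofReal_le_ofReal (mul_neg_log_le_one toReal_nonneg)

lemma ofReal_klFun_add_eq {g y : ℝ≥0∞} (hg : g ≠ ∞) (hy : y ≠ ∞) (hgy : y = 0 → g = 0) :
    ENNReal.ofReal (klFun g.toReal)
        + (g * ENNReal.ofReal (-Real.log y.toReal) + y * ENNReal.ofReal (Real.log y.toReal))
      = y * ENNReal.ofReal (klFun (g / y).toReal) + ENNReal.ofReal (klFun y.toReal)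
        + (g * ENNReal.ofReal (Real.log y.toReal) + y * ENNReal.ofReal (-Real.log y.toReal)) := by
  rcases eq_or_ne y 0 with rfl | hy0
  · simp [hgy rfl]
  obtain ⟨a, ha, rfl⟩ : ∃ a, 0 ≤ a ∧ ENNReal.ofReal a = g := ⟨_, toReal_nonneg, ofReal_toReal hg⟩
  obtain ⟨b, hb, rfl⟩ : ∃ b, 0 < b ∧ ENNReal.ofReal b = y :=
    ⟨_, toReal_pos hy0 hy, ofReal_toReal hy⟩
  have hdecomp := klFun_eq_mul_klFun_div_add (a := a) hb.ne'
  have h₁ : 0 ≤ b * klFun (a / b) := mul_nonneg hb.le (klFun_nonneg (div_nonneg ha hb.le))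
  have h₂ := klFun_nonneg hb.le
  simp only [toReal_ofReal ha, toReal_ofReal hb.le, ← ofReal_div_of_pos hb,
    toReal_ofReal (div_nonneg ha hb.le), ← ofReal_mul ha, ← ofReal_mul hb.le]
  -- `ofReal` truncates at `0`, so on each side only the terms with the sign of `log b` survive.
  rcases le_total 0 (Real.log b) with hL | hL
  · rw [ofReal_of_nonpos (by nlinarith : a * -Real.log b ≤ 0),
      ofReal_of_nonpos (by nlinarith : b * -Real.log b ≤ 0), zero_add, add_zero,
      ← ofReal_add (klFun_nonneg ha) (mul_nonneg hb.le hL),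
      ← ofReal_add h₁ h₂,
      ← ofReal_add (add_nonneg h₁ h₂) (mul_nonneg ha hL)]
    congr 1
    linarith
  · rw [ofReal_of_nonpos (by nlinarith : a * Real.log b ≤ 0),
      ofReal_of_nonpos (by nlinarith : b * Real.log b ≤ 0), zero_add, add_zero,
      ← ofReal_add (klFun_nonneg ha) (mul_nonneg ha (neg_nonneg.2 hL)),
      ← ofReal_add h₁ h₂,
      ← ofReal_add (add_nonneg h₁ h₂) (mul_nonneg hb.le (neg_nonneg.2 hL))]
    congr 1
    linarith

end ENNReal

section Divergence

variable {Ω : Type*} [mΩ : MeasurableSpace Ω] {μ ν : Measure Ω}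

lemma infoDiv_of_ac (h : μ ≪ ν) :
    infoDiv μ ν = ∫⁻ x, ENNReal.ofReal (klFun (μ.rnDeriv ν x).toReal) ∂ν := by
  rw [infoDiv, if_pos h]
  congr with x
  rw [klFun_apply]
  ring_nf

lemma infoDiv_of_not_ac (h : ¬ μ ≪ ν) : infoDiv μ ν = ∞ := if_neg h

lemma infoDiv_withDensity [SigmaFinite ν] {f : Ω → ℝ≥0∞} (hf : Measurable f) :
    infoDiv (ν.withDensity f) ν = ∫⁻ x, ENNReal.ofReal (klFun (f x).toReal) ∂ν := by
  rw [infoDiv_of_ac (withDensity_absolutelyContinuous ν f)]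
  exact lintegral_congr_ae ((Measure.rnDeriv_withDensity ν hf).mono fun x hx => by simp only [hx])

lemma withDensity_withDensity_div {g Y : Ω → ℝ≥0∞} (hg : Measurable g) (hY : Measurable Y)
    (hY_fin : ∀ᵐ x ∂ν, Y x ≠ ∞) (hgY : ∀ᵐ x ∂ν, Y x = 0 → g x = 0) :
    (ν.withDensity Y).withDensity (g / Y) = ν.withDensity g := by
  rw [← withDensity_mul ν hY (hg.div hY)]
  refine withDensity_congr_ae ?_
  filter_upwards [hY_fin, hgY] with x hx hx0
  rcases eq_or_ne (Y x) 0 with h0 | h0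
  · simp [h0, hx0 h0]
  · exact ENNReal.mul_div_cancel h0 hx

lemma infoDiv_withDensity_withDensity {g Y : Ω → ℝ≥0∞} (hg : Measurable g) (hY : Measurable Y)
    (hY_int : ∫⁻ x, Y x ∂ν ≠ ∞) (hgY : ∀ᵐ x ∂ν, Y x = 0 → g x = 0) :
    infoDiv (ν.withDensity g) (ν.withDensity Y)
      = ∫⁻ x, Y x * ENNReal.ofReal (klFun (g x / Y x).toReal) ∂ν := by
  have : IsFiniteMeasure (ν.withDensity Y) := isFiniteMeasure_withDensity hY_int
  have hY_fin : ∀ᵐ x ∂ν, Y x ≠ ∞ := (ae_lt_top hY hY_int).mono fun _ => ne_of_lt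
  rw [← withDensity_withDensity_div hg hY hY_fin hgY, infoDiv_withDensity (hg.div hY),
    lintegral_withDensity_eq_lintegral_mul _ hY (by fun_prop)]
  rfl

lemma lintegral_klFun_add_eq {g Y : Ω → ℝ≥0∞} (hg : Measurable g) (hY : Measurable Y)
    (hg_fin : ∀ᵐ x ∂ν, g x ≠ ∞) (hY_fin : ∀ᵐ x ∂ν, Y x ≠ ∞) (hgY : ∀ᵐ x ∂ν, Y x = 0 → g x = 0) :
    ∫⁻ x, ENNReal.ofReal (klFun (g x).toReal) ∂ν
        + (∫⁻ x, g x * ENNReal.ofReal (-log (Y x).toReal) ∂ν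
          + ∫⁻ x, Y x * ENNReal.ofReal (log (Y x).toReal) ∂ν)
      = ∫⁻ x, Y x * ENNReal.ofReal (klFun (g x / Y x).toReal) ∂ν
          + ∫⁻ x, ENNReal.ofReal (klFun (Y x).toReal) ∂ν
        + (∫⁻ x, g x * ENNReal.ofReal (log (Y x).toReal) ∂ν
          + ∫⁻ x, Y x * ENNReal.ofReal (-log (Y x).toReal) ∂ν) := by
  rw [← lintegral_add_left (by fun_prop), ← lintegral_add_left (by fun_prop),
    ← lintegral_add_left (by fun_prop), ← lintegral_add_left (by fun_prop),
    ← lintegral_add_left (by fun_prop)]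
  refine lintegral_congr_ae ?_
  filter_upwards [hg_fin, hY_fin, hgY] with x hgx hYx hgYx
  exact ENNReal.ofReal_klFun_add_eq hgx hYx hgYx

lemma lintegral_ofReal_klFun_eq_top {u Y : Ω → ℝ≥0∞} (hu : Measurable u)
    (hu_fin : ∀ᵐ x ∂ν, u x ≠ ∞) (hY_fin : ∀ᵐ x ∂ν, Y x ≠ ∞) (hY_int : ∫⁻ x, Y x ∂ν ≠ ∞)
    (h : ∫⁻ x, u x * ENNReal.ofReal (log (Y x).toReal) ∂ν = ∞) :
    ∫⁻ x, ENNReal.ofReal (klFun (u x).toReal) ∂ν = ∞ := by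
  have hle : ∫⁻ x, u x * ENNReal.ofReal (log (Y x).toReal) ∂ν
      ≤ ∫⁻ x, ENNReal.ofReal (klFun (u x).toReal) ∂ν + ∫⁻ x, Y x ∂ν := by
    rw [← lintegral_add_left (by fun_prop)]
    refine lintegral_mono_ae ?_
    filter_upwards [hu_fin, hY_fin] with x hux hYx
    exact ENNReal.mul_ofReal_log_le hux hYx
  rw [h, top_le_iff, ENNReal.add_eq_top] at hle
  exact hle.resolve_right hY_int

end Divergence

section Conditioning

variable {Ω : Type*} {F : MeasurableSpace Ω} [mΩ : MeasurableSpace Ω] (hF : F ≤ mΩ)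
  {ν : Measure Ω} {g Y : Ω → ℝ≥0∞}

lemma lintegral_mul_eq_of_trim_withDensity_eq (hg : Measurable g) (hY : Measurable Y)
    (htrim : (ν.withDensity g).trim hF = (ν.withDensity Y).trim hF)
    {k : Ω → ℝ≥0∞} (hk : Measurable[F] k) :
    ∫⁻ x, g x * k x ∂ν = ∫⁻ x, Y x * k x ∂ν := by
  have hk' : Measurable k := hk.mono hF le_rfl
  have hg' := lintegral_withDensity_eq_lintegral_mul ν hg hk'
  have hY' := lintegral_withDensity_eq_lintegral_mul ν hY hk'
  simp only [Pi.mul_apply] at hg' hY'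
  rw [← hg', ← hY', ← lintegral_trim hF hk, htrim, lintegral_trim hF hk]

lemma ae_eq_zero_of_trim_withDensity_eq (hg : Measurable g) (hY : Measurable[F] Y)
    (htrim : (ν.withDensity g).trim hF = (ν.withDensity Y).trim hF) :
    ∀ᵐ x ∂ν, Y x = 0 → g x = 0 := by
  suffices ∀ᵐ x ∂ν, g x ≠ 0 → Y x ≠ 0 from this.mono fun _ h => not_imp_not.mp h
  rw [← ae_withDensity_iff hg]
  refine ae_of_ae_trim hF ?_
  rw [htrim, trim_withDensity hF hY, ae_withDensity_iff hY]
  exact ae_of_all _ fun _ => id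

theorem infoDiv_withDensity_eq_add [IsFiniteMeasure ν] (hg : Measurable g) (hY : Measurable[F] Y)
    (hY_int : ∫⁻ x, Y x ∂ν ≠ ∞)
    (htrim : (ν.withDensity g).trim hF = (ν.withDensity Y).trim hF) :
    infoDiv (ν.withDensity g) ν
      = infoDiv (ν.withDensity g) (ν.withDensity Y) + infoDiv (ν.withDensity Y) ν := by
  have hY' : Measurable Y := hY.mono hF le_rfl
  have hgY := ae_eq_zero_of_trim_withDensity_eq hF hg hY htrim
  have htest {k : Ω → ℝ≥0∞} (hk : Measurable[F] k) :=
    lintegral_mul_eq_of_trim_withDensity_eq hF hg hY' htrim hk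
  have hg_int : ∫⁻ x, g x ∂ν ≠ ∞ := by
    have h := htest (k := 1) measurable_const
    simp only [Pi.one_apply, mul_one] at h
    rwa [h]
  have hg_fin : ∀ᵐ x ∂ν, g x ≠ ∞ := (ae_lt_top hg hg_int).mono fun _ => ne_of_lt
  have hY_fin : ∀ᵐ x ∂ν, Y x ≠ ∞ := (ae_lt_top hY' hY_int).mono fun _ => ne_of_lt
  have hlogY : Measurable[F] fun x => log (Y x).toReal := measurable_log.comp hY.ennreal_toReal
  have hneglogY : Measurable[F] fun x => -log (Y x).toReal := hlogY.neg
  have key := lintegral_klFun_add_eq hg hY' hg_fin hY_fin hgY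
  rw [htest hlogY.ennreal_ofReal, htest hneglogY.ennreal_ofReal,
    add_comm (∫⁻ x, Y x * ENNReal.ofReal (-log (Y x).toReal) ∂ν)] at key
  rw [infoDiv_withDensity hg, infoDiv_withDensity_withDensity hg hY' hY_int hgY,
    infoDiv_withDensity hY']
  by_cases hpos : ∫⁻ x, Y x * ENNReal.ofReal (log (Y x).toReal) ∂ν = ∞
  · rw [lintegral_ofReal_klFun_eq_top hY' hY_fin hY_fin hY_int hpos,
      lintegral_ofReal_klFun_eq_top hg hg_fin hY_fin hY_int
        ((htest hlogY.ennreal_ofReal).trans hpos),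
      add_top]
  have hneg : ∫⁻ x, Y x * ENNReal.ofReal (-log (Y x).toReal) ∂ν ≠ ∞ := by
    refine ne_top_of_le_ne_top (measure_ne_top ν Set.univ) ?_
    rw [← setLIntegral_one, setLIntegral_univ]
    exact lintegral_mono_ae (hY_fin.mono fun x hx => ENNReal.mul_ofReal_neg_log_le_one hx)
  exact (ENNReal.add_left_inj (ENNReal.add_ne_top.2 ⟨hpos, hneg⟩)).1 key

end Conditioning

theorem infoDiv_pythagorean_general
    {Ω : Type*} [mΩ : MeasurableSpace Ω] (ν : Measure Ω) [IsFiniteMeasure ν]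
    (μ : Measure Ω)
    (F : MeasurableSpace Ω) (hF : F ≤ mΩ)
    (Y : Ω → ℝ≥0∞) (hYmeas : Measurable[F] Y)
    (hY : ∀ A : Set Ω, MeasurableSet[F] A → ∫⁻ x in A, Y x ∂ν = μ A)
    (θ : @Measure Ω mΩ) [IsFiniteMeasure θ]
    (hθ : ∀ A : Set Ω, MeasurableSet[F] A → θ A = μ A) :
    @infoDiv Ω mΩ θ ν
      = @infoDiv Ω mΩ θ (ν.withDensity Y) + @infoDiv Ω mΩ (ν.withDensity Y) ν := by
  have hY_int : ∫⁻ x, Y x ∂ν ≠ ∞ := by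
    rw [← setLIntegral_univ, hY _ MeasurableSet.univ, ← hθ _ MeasurableSet.univ]
    exact measure_ne_top θ _
  by_cases hac : θ ≪ ν
  swap
  · have hacY : ¬ θ ≪ ν.withDensity Y :=
      fun h => hac (h.trans (withDensity_absolutelyContinuous ν Y))
    rw [infoDiv_of_not_ac (mΩ := mΩ) hac, infoDiv_of_not_ac (mΩ := mΩ) hacY, top_add]
  rw [← Measure.withDensity_rnDeriv_eq θ ν hac]
  refine infoDiv_withDensity_eq_add (mΩ := mΩ) hF (θ.measurable_rnDeriv ν) hYmeas hY_int ?_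
  refine @Measure.ext _ F _ _ fun A hA => ?_
  rw [trim_measurableSet_eq hF hA, trim_measurableSet_eq hF hA,
    Measure.withDensity_rnDeriv_eq θ ν hac, hθ A hA, withDensity_apply _ (hF A hA), hY A hA]

/-- Pythagorean identity for the information projection: if `Y` is a conditional
density of `μ = ν.withDensity ρ` given a sub-σ-algebra `F`, and `θ` is a finite
measure agreeing with `μ` on `F`, then `D(θ‖ν) = D(θ‖μ_F) + D(μ_F‖ν)` where
`μ_F = ν.withDensity Y`. -/
theorem infoDiv_pythagorean
    {Ω : Type*} [mΩ : MeasurableSpace Ω] (ν : Measure Ω) [IsFiniteMeasure ν]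
    (ρ : Ω → ℝ≥0∞) (hρ : Measurable ρ)
    (μ : Measure Ω) (hμ : μ = ν.withDensity ρ) [IsFiniteMeasure μ]
    (F : MeasurableSpace Ω) (hF : F ≤ mΩ)
    (Y : Ω → ℝ≥0∞) (hYmeas : Measurable[F] Y)
    (hY : ∀ A : Set Ω, MeasurableSet[F] A → ∫⁻ x in A, Y x ∂ν = μ A)
    (θ : @Measure Ω mΩ) [IsFiniteMeasure θ]
    (hθ : ∀ A : Set Ω, MeasurableSet[F] A → θ A = μ A) :
    @infoDiv Ω mΩ θ ν
      = @infoDiv Ω mΩ θ (ν.withDensity Y) + @infoDiv Ω mΩ (ν.withDensity Y) ν :=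
  infoDiv_pythagorean_general (mΩ := mΩ) ν μ F hF Y hYmeas hY θ hθ
end

section
/- Let ν be a finite measure on a measurable space (Ω, 𝒜), let μ = ν.withDensity ρ be a finite measure, let F ⊆ 𝒜 be a sub-σ-algebra, let Y be a conditional density of μ given F with respect to ν, and set μ_F := ν.withDensity Y. Then D(μ_F‖ν) ≤ D(θ‖ν) for every finite measure θ on (Ω, 𝒜) with θ(A) = μ(A) for all A ∈ F; i.e. μ_F is the information projection of ν onto the set of measures agreeing with μ on F. -/
/-!
`D(θ‖ν)` is the Kullback–Leibler divergence `InformationTheory.klDiv θ ν`. Since the density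
`Y` of `μ_F` is `F`-measurable, `D(μ_F‖ν)` does not change when both measures are restricted
to `F`, and there `μ_F` and `θ` coincide. Hence `D(μ_F‖ν) = D(θ|_F‖ν|_F) ≤ D(θ‖ν)` by the
data processing inequality for sub-σ-algebras.
-/

open MeasureTheory Filter Topology ENNReal

open InformationTheory

theorem infoDiv_eq_klDiv {Ω : Type*} {mΩ : MeasurableSpace Ω} (μ ν : Measure Ω)
    [IsFiniteMeasure μ] [IsFiniteMeasure ν] : infoDiv μ ν = klDiv μ ν := by
  simp only [infoDiv, klDiv_eq_lintegral_klFun, klFun_apply, sub_add_eq_add_sub]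

theorem klDiv_withDensity_eq_lintegral {Ω : Type*} {mΩ : MeasurableSpace Ω} (ν : Measure Ω)
    [IsFiniteMeasure ν] {f : Ω → ℝ≥0∞} (hf : Measurable f)
    [IsFiniteMeasure (ν.withDensity f)] :
    klDiv (ν.withDensity f) ν = ∫⁻ x, ENNReal.ofReal (klFun (f x).toReal) ∂ν := by
  rw [klDiv_eq_lintegral_klFun_of_ac (withDensity_absolutelyContinuous ν f)]
  refine lintegral_congr_ae ?_
  filter_upwards [Measure.rnDeriv_withDensity ν hf] with x hx
  rw [hx]

theorem klDiv_trim_withDensity {Ω : Type*} {m mΩ : MeasurableSpace Ω} (hm : m ≤ mΩ)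
    (ν : Measure Ω) [IsFiniteMeasure ν] {f : Ω → ℝ≥0∞} (hf : Measurable[m] f)
    [IsFiniteMeasure (ν.withDensity f)] :
    klDiv ((ν.withDensity f).trim hm) (ν.trim hm) = klDiv (ν.withDensity f) ν := by
  have : IsFiniteMeasure ((ν.trim hm).withDensity f) := by
    rw [← trim_withDensity hm hf]
    infer_instance
  rw [trim_withDensity hm hf, klDiv_withDensity_eq_lintegral _ hf,
    klDiv_withDensity_eq_lintegral _ (hf.mono hm le_rfl), lintegral_trim hm (by fun_prop)]

theorem infoDiv_projection_general
    {Ω : Type*} [mΩ : MeasurableSpace Ω] (ν : Measure Ω) [IsFiniteMeasure ν]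
    (μ : Measure Ω) [IsFiniteMeasure μ]
    (F : MeasurableSpace Ω) (hF : F ≤ mΩ)
    (Y : Ω → ℝ≥0∞) (hYmeas : Measurable[F] Y)
    (hY : ∀ A : Set Ω, MeasurableSet[F] A → ∫⁻ x in A, Y x ∂ν = μ A) :
    ∀ θ : @Measure Ω mΩ, IsFiniteMeasure θ →
      (∀ A : Set Ω, MeasurableSet[F] A → θ A = μ A) →
      @infoDiv Ω mΩ (ν.withDensity Y) ν ≤ @infoDiv Ω mΩ θ ν := by
  intro θ _ hθ
  have : IsFiniteMeasure (ν.withDensity Y) := by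
    refine isFiniteMeasure_withDensity ?_
    rw [← setLIntegral_univ, hY _ MeasurableSet.univ]
    exact measure_ne_top μ _
  have htrim : (ν.withDensity Y).trim hF = θ.trim hF := by
    refine @Measure.ext _ F _ _ fun A hA => ?_
    rw [trim_measurableSet_eq hF hA, trim_measurableSet_eq hF hA,
      withDensity_apply _ (hF A hA), hY A hA, hθ A hA]
  rw [infoDiv_eq_klDiv, infoDiv_eq_klDiv, ← klDiv_trim_withDensity hF ν hYmeas, htrim]
  exact klDiv_trim_le θ ν hF

/-- `μ_F := ν.withDensity Y`, with `Y` a conditional density of `μ` given the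
sub-σ-algebra `F`, is the information projection of `ν` onto the set of finite
measures agreeing with `μ` on `F`: `D(μ_F‖ν) ≤ D(θ‖ν)` for all such `θ`. -/
theorem infoDiv_projection
    {Ω : Type*} [mΩ : MeasurableSpace Ω] (ν : Measure Ω) [IsFiniteMeasure ν]
    (ρ : Ω → ℝ≥0∞) (hρ : Measurable ρ)
    (μ : Measure Ω) (hμ : μ = ν.withDensity ρ) [IsFiniteMeasure μ]
    (F : MeasurableSpace Ω) (hF : F ≤ mΩ)
    (Y : Ω → ℝ≥0∞) (hYmeas : Measurable[F] Y)
    (hY : ∀ A : Set Ω, MeasurableSet[F] A → ∫⁻ x in A, Y x ∂ν = μ A) :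
    ∀ θ : @Measure Ω mΩ, IsFiniteMeasure θ →
      (∀ A : Set Ω, MeasurableSet[F] A → θ A = μ A) →
      @infoDiv Ω mΩ (ν.withDensity Y) ν ≤ @infoDiv Ω mΩ θ ν :=
  infoDiv_projection_general (mΩ := mΩ) ν μ F hF Y hYmeas hY
end

section
/- Let ν be a finite measure on (Ω, 𝒜) and let μ = ν.withDensity ρ be a finite measure with D(μ‖ν) < ∞. Let (F_n) be an increasing sequence of sub-σ-algebras of 𝒜 and let Y_n be a conditional density of μ given F_n with respect to ν. If D(ν.withDensity Y_n ‖ ν) → D(μ‖ν) as n → ∞, then the sequence (Y_n) converges ν-almost everywhere to ρ, i.e. the conditional densities converge pointwise a.e. to a Radon–Nikodym derivative of μ with respect to ν. -/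
/-!
Write `f = ρ`, `g = E[f | ⨆ₙ Fₙ]` and `D(h) = ∫ φ(h) dν` (`densityDiv ν h`)
with `φ(t) = t log t − t + 1` (`klFun`).
The conditional densities are `Yₙ = E[f | Fₙ] = E[g | Fₙ]`, so Lévy's upward theorem gives
`Yₙ → g` a.e. and Fatou's lemma gives `D(g) ≤ lim D(Yₙ) = D(f)`. Since also
`Yₙ = E[(f + g)/2 | Fₙ]`, conditional Jensen gives `D(Yₙ) ≤ D((f + g)/2)`, hence
`D(f) ≤ D((f + g)/2) ≤ (D(f) + D(g))/2 ≤ D(f)`. Strict convexity of `φ` turns the equality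
`D((f + g)/2) = (D(f) + D(g))/2` into `f = g` a.e.
-/

open MeasureTheory Filter Topology ENNReal

open InformationTheory

noncomputable def densityDiv {Ω : Type*} [MeasurableSpace Ω] (ν : Measure Ω) (f : Ω → ℝ) :
    ℝ≥0∞ :=
  ∫⁻ x, ENNReal.ofReal (klFun (f x)) ∂ν

lemma ofReal_klFun_midpoint_lt {a b : ℝ} (ha : 0 ≤ a) (hb : 0 ≤ b) (hab : a ≠ b) :
    ENNReal.ofReal (klFun ((a + b) / 2)) <
      (ENNReal.ofReal (klFun a) + ENNReal.ofReal (klFun b)) / 2 := by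
  have h := strictConvexOn_klFun.2 ha hb hab (by norm_num : (0 : ℝ) < 1 / 2)
    (by norm_num : (0 : ℝ) < 1 / 2) (by norm_num)
  simp only [smul_eq_mul] at h
  rw [show (1 / 2 : ℝ) * a + 1 / 2 * b = (a + b) / 2 by ring] at h
  rw [← ENNReal.ofReal_add (klFun_nonneg ha) (klFun_nonneg hb), ← ENNReal.ofReal_ofNat 2,
    ← ENNReal.ofReal_div_of_pos two_pos, ENNReal.ofReal_lt_ofReal_iff_of_nonneg]
  · linarith
  · exact klFun_nonneg (by positivity)

lemma ofReal_klFun_midpoint_le {a b : ℝ} (ha : 0 ≤ a) (hb : 0 ≤ b) :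
    ENNReal.ofReal (klFun ((a + b) / 2)) ≤
      (ENNReal.ofReal (klFun a) + ENNReal.ofReal (klFun b)) / 2 := by
  rcases eq_or_ne a b with rfl | hab
  · rw [add_self_div_two, ENNReal.add_div, ENNReal.add_halves]
  · exact (ofReal_klFun_midpoint_lt ha hb hab).le

section

variable {Ω : Type*} {m mΩ : MeasurableSpace Ω} {ν : Measure Ω}

lemma densityDiv_congr_ae {f g : Ω → ℝ} (h : f =ᵐ[ν] g) : densityDiv ν f = densityDiv ν g :=
  lintegral_congr_ae (h.mono fun _ hx => congrArg (fun t => ENNReal.ofReal (klFun t)) hx)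

lemma infoDiv_withDensity_s14 [SigmaFinite ν] {w : Ω → ℝ≥0∞} (hw : Measurable w) :
    infoDiv (ν.withDensity w) ν = densityDiv ν fun x => (w x).toReal := by
  rw [infoDiv, if_pos (withDensity_absolutelyContinuous ν w)]
  refine lintegral_congr_ae ?_
  filter_upwards [Measure.rnDeriv_withDensity ν hw] with x hx
  rw [hx, klFun_apply]
  ring_nf

lemma toReal_ae_eq_condExp_of_setLIntegral_eq (hm : m ≤ mΩ) [SigmaFinite (ν.trim hm)]
    {ρ Y : Ω → ℝ≥0∞} (hρ : AEMeasurable ρ ν) (hρ_fin : ∫⁻ x, ρ x ∂ν ≠ ∞) (hY : Measurable[m] Y)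
    (hYρ : ∀ s, MeasurableSet[m] s → ∫⁻ x in s, Y x ∂ν = ∫⁻ x in s, ρ x ∂ν) :
    (fun x => (Y x).toReal) =ᵐ[ν] ν[fun x => (ρ x).toReal|m] := by
  have hY_fin : ∫⁻ x, Y x ∂ν ≠ ∞ := by
    rwa [← setLIntegral_univ, hYρ _ MeasurableSet.univ, setLIntegral_univ]
  have hYm : AEMeasurable Y ν := (hY.mono hm le_rfl).aemeasurable
  refine ae_eq_condExp_of_forall_setIntegral_eq hm
    (integrable_toReal_of_lintegral_ne_top hρ hρ_fin)
    (fun s _ _ => (integrable_toReal_of_lintegral_ne_top hYm hY_fin).integrableOn)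
    (fun s hs _ => ?_) hY.ennreal_toReal.stronglyMeasurable.aestronglyMeasurable
  rw [integral_toReal hYm.restrict (ae_restrict_of_ae (ae_lt_top' hYm hY_fin)),
    integral_toReal hρ.restrict (ae_restrict_of_ae (ae_lt_top' hρ hρ_fin)), hYρ s hs]

theorem tendsto_ae_condExp_iSup [IsFiniteMeasure ν] (ℱ : Filtration ℕ mΩ) (f : Ω → ℝ) :
    ∀ᵐ x ∂ν, Tendsto (fun n => ν[f|ℱ n] x) atTop (𝓝 (ν[f|⨆ n, ℱ n] x)) := by
  have htower : ∀ n, ν[ν[f|⨆ n, ℱ n]|ℱ n] =ᵐ[ν] ν[f|ℱ n] := fun n =>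
    condExp_condExp_of_le (le_iSup ℱ n) (iSup_le ℱ.le)
  filter_upwards [integrable_condExp.tendsto_ae_condExp stronglyMeasurable_condExp,
    ae_all_iff.2 htower] with x hx htx
  exact hx.congr fun n => htx n

lemma densityDiv_le_liminf_of_tendsto {f : ℕ → Ω → ℝ} {g : Ω → ℝ}
    (hf : ∀ n, AEMeasurable (f n) ν)
    (hlim : ∀ᵐ x ∂ν, Tendsto (fun n => f n x) atTop (𝓝 (g x))) :
    densityDiv ν g ≤ liminf (fun n => densityDiv ν (f n)) atTop :=
  calc densityDiv ν g = ∫⁻ x, liminf (fun n => ENNReal.ofReal (klFun (f n x))) atTop ∂ν := by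
        refine lintegral_congr_ae ?_
        filter_upwards [hlim] with x hx
        exact (((ENNReal.continuous_ofReal.comp continuous_klFun).tendsto _).comp hx).liminf_eq.symm
    _ ≤ liminf (fun n => densityDiv ν (f n)) atTop :=
        lintegral_liminf_le' fun n =>
          (ENNReal.measurable_ofReal.comp measurable_klFun).comp_aemeasurable (hf n)

lemma densityDiv_condExp_le (hm : m ≤ mΩ) [SigmaFinite (ν.trim hm)] {f : Ω → ℝ}
    (hf : Integrable f ν) (hf0 : 0 ≤ᵐ[ν] f) :
    densityDiv ν (ν[f|m]) ≤ densityDiv ν f := by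
  by_cases hD : densityDiv ν f = ∞
  · simp [hD]
  have hkl_nonneg : 0 ≤ᵐ[ν] fun x => klFun (f x) := by
    filter_upwards [hf0] with x hx using klFun_nonneg hx
  have hkl_int : Integrable (fun x => klFun (f x)) ν :=
    ⟨continuous_klFun.comp_aestronglyMeasurable hf.1, by
      rwa [hasFiniteIntegral_iff_ofReal hkl_nonneg, lt_top_iff_ne_top]⟩
  have hJensen : (fun x => klFun (ν[f|m] x)) ≤ᵐ[ν] ν[fun x => klFun (f x)|m] :=
    convexOn_klFun.map_condExp_le hm
      (continuous_klFun.lowerSemicontinuous.lowerSemicontinuousOn _) hf0 isClosed_Ici hf hkl_int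
  calc densityDiv ν (ν[f|m]) ≤ ∫⁻ x, ENNReal.ofReal (ν[fun x => klFun (f x)|m] x) ∂ν :=
        lintegral_mono_ae (hJensen.mono fun x hx => ENNReal.ofReal_le_ofReal hx)
    _ = ENNReal.ofReal (∫ x, ν[fun x => klFun (f x)|m] x ∂ν) :=
        (ofReal_integral_eq_lintegral_ofReal integrable_condExp (condExp_nonneg hkl_nonneg)).symm
    _ = densityDiv ν f := by
        rw [integral_condExp hm, ofReal_integral_eq_lintegral_ofReal hkl_int hkl_nonneg]
        rfl

lemma densityDiv_condExp_le_densityDiv_midpoint (hm : m ≤ mΩ) [SigmaFinite (ν.trim hm)]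
    {f g : Ω → ℝ} (hf : Integrable f ν) (hg : Integrable g ν) (hf0 : 0 ≤ᵐ[ν] f)
    (hg0 : 0 ≤ᵐ[ν] g) (hfg : ν[g|m] =ᵐ[ν] ν[f|m]) :
    densityDiv ν (ν[f|m]) ≤ densityDiv ν fun x => (f x + g x) / 2 := by
  have hmid_eq : (fun x => (f x + g x) / 2) = (2⁻¹ : ℝ) • (f + g) := by
    ext x
    simp only [Pi.smul_apply, Pi.add_apply, smul_eq_mul]
    ring
  have hmid : ν[fun x => (f x + g x) / 2|m] =ᵐ[ν] ν[f|m] := by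
    rw [hmid_eq]
    filter_upwards [condExp_smul (2⁻¹ : ℝ) (f + g) m, condExp_add hf hg m, hfg]
      with x hsmul hadd hx
    rw [hsmul, Pi.smul_apply, hadd, Pi.add_apply, hx, smul_eq_mul]
    ring
  rw [← densityDiv_congr_ae hmid]
  refine densityDiv_condExp_le hm ((hf.add hg).div_const 2) ?_
  filter_upwards [hf0, hg0] with x hfx hgx using div_nonneg (add_nonneg hfx hgx) two_pos.le

lemma ae_eq_of_densityDiv_le_densityDiv_midpoint {f g : Ω → ℝ} (hf : AEMeasurable f ν)
    (hg : AEMeasurable g ν) (hf0 : 0 ≤ᵐ[ν] f) (hg0 : 0 ≤ᵐ[ν] g) (hDf : densityDiv ν f ≠ ∞)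
    (hDg : densityDiv ν g ≤ densityDiv ν f)
    (hmid : densityDiv ν f ≤ densityDiv ν fun x => (f x + g x) / 2) : f =ᵐ[ν] g := by
  set k : Ω → ℝ≥0∞ := fun x => (ENNReal.ofReal (klFun (f x)) + ENNReal.ofReal (klFun (g x))) / 2
  have hk_meas : AEMeasurable k ν := by
    have hφ : Measurable fun t => ENNReal.ofReal (klFun t) :=
      ENNReal.measurable_ofReal.comp measurable_klFun
    exact ((hφ.comp_aemeasurable hf).add (hφ.comp_aemeasurable hg)).div_const 2
  have hle : (fun x => ENNReal.ofReal (klFun ((f x + g x) / 2))) ≤ᵐ[ν] k := by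
    filter_upwards [hf0, hg0] with x hfx hgx using ofReal_klFun_midpoint_le hfx hgx
  have hk : ∫⁻ x, k x ∂ν ≤ densityDiv ν f :=
    calc ∫⁻ x, k x ∂ν = (densityDiv ν f + densityDiv ν g) / 2 := by
          simp only [k, div_eq_mul_inv]
          rw [lintegral_mul_const' _ _ (by simp), lintegral_add_left' (by fun_prop)]
          rfl
      _ ≤ (densityDiv ν f + densityDiv ν f) / 2 := by gcongr
      _ = densityDiv ν f := by rw [ENNReal.add_div, ENNReal.add_halves]
  have heq := ae_eq_of_ae_le_of_lintegral_le hle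
    (ne_top_of_le_ne_top hDf ((lintegral_mono_ae hle).trans hk)) hk_meas (hk.trans hmid)
  filter_upwards [heq, hf0, hg0] with x hx hfx hgx
  by_contra hne
  exact (ofReal_klFun_midpoint_lt hfx hgx hne).ne hx

theorem tendsto_ae_condExp_of_tendsto_densityDiv [IsFiniteMeasure ν] (ℱ : Filtration ℕ mΩ)
    {f : Ω → ℝ} (hf : Integrable f ν) (hf0 : 0 ≤ᵐ[ν] f) (hDf : densityDiv ν f ≠ ∞)
    (hconv : Tendsto (fun n => densityDiv ν (ν[f|ℱ n])) atTop (𝓝 (densityDiv ν f))) :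
    ∀ᵐ x ∂ν, Tendsto (fun n => ν[f|ℱ n] x) atTop (𝓝 (f x)) := by
  set g := ν[f|⨆ n, ℱ n]
  have hg0 : 0 ≤ᵐ[ν] g := condExp_nonneg hf0
  have hlim : ∀ᵐ x ∂ν, Tendsto (fun n => ν[f|ℱ n] x) atTop (𝓝 (g x)) :=
    tendsto_ae_condExp_iSup ℱ f
  have hDg : densityDiv ν g ≤ densityDiv ν f :=
    (densityDiv_le_liminf_of_tendsto (fun n => integrable_condExp.aemeasurable) hlim).trans_eq
      hconv.liminf_eq
  have hDmid : densityDiv ν f ≤ densityDiv ν fun x => (f x + g x) / 2 :=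
    le_of_tendsto' hconv fun n =>
      densityDiv_condExp_le_densityDiv_midpoint (ℱ.le n) hf integrable_condExp hf0 hg0
        (condExp_condExp_of_le (le_iSup ℱ n) (iSup_le ℱ.le))
  have hfg : f =ᵐ[ν] g := ae_eq_of_densityDiv_le_densityDiv_midpoint hf.aemeasurable
    integrable_condExp.aemeasurable hf0 hg0 hDf hDg hDmid
  filter_upwards [hlim, hfg] with x hx hfgx
  rwa [hfgx]

end

/-- Radon–Nikodym theorem via information projections: if `Yₙ` are conditional
densities of `μ = ν.withDensity ρ` given an increasing sequence of sub-σ-algebras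
`Fₙ` and `D(ν.withDensity Yₙ‖ν) → D(μ‖ν) < ∞`, then `Yₙ → ρ` pointwise
ν-almost everywhere. -/
theorem conditional_densities_tendsto_rnDeriv_ae
    {Ω : Type*} [mΩ : MeasurableSpace Ω] (ν : Measure Ω) [IsFiniteMeasure ν]
    (ρ : Ω → ℝ≥0∞) (hρ : Measurable ρ)
    (μ : Measure Ω) (hμ : μ = ν.withDensity ρ) [IsFiniteMeasure μ]
    (hfin : infoDiv μ ν < ∞)
    (F : ℕ → MeasurableSpace Ω) (hFmono : Monotone F) (hFle : ∀ n, F n ≤ mΩ)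
    (Y : ℕ → Ω → ℝ≥0∞) (hYmeas : ∀ n, Measurable[F n] (Y n))
    (hY : ∀ n, ∀ A : Set Ω, MeasurableSet[F n] A → ∫⁻ x in A, Y n x ∂ν = μ A)
    (hconv : Tendsto (fun n => @infoDiv Ω mΩ (ν.withDensity (Y n)) ν) atTop
      (𝓝 (@infoDiv Ω mΩ μ ν))) :
    ∀ᵐ x ∂ν, Tendsto (fun n => Y n x) atTop (𝓝 (ρ x)) := by
  set f : Ω → ℝ := fun x => (ρ x).toReal
  have hρ_fin : ∫⁻ x, ρ x ∂ν ≠ ∞ := by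
    rw [← setLIntegral_univ, ← withDensity_apply ρ MeasurableSet.univ, ← hμ]
    exact measure_ne_top μ _
  have hf : Integrable f ν := integrable_toReal_of_lintegral_ne_top hρ.aemeasurable hρ_fin
  have hf0 : 0 ≤ᵐ[ν] f := ae_of_all _ fun x => ENNReal.toReal_nonneg
  have hYf : ∀ n, (fun x => (Y n x).toReal) =ᵐ[ν] ν[f|F n] := fun n =>
    toReal_ae_eq_condExp_of_setLIntegral_eq (hFle n) hρ.aemeasurable hρ_fin (hYmeas n)
      fun s hs => by rw [hY n s hs, hμ, withDensity_apply ρ (hFle n s hs)]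
  have hY_lt_top : ∀ n, ∀ᵐ x ∂ν, Y n x < ∞ := fun n => by
    refine ae_lt_top ((hYmeas n).mono (hFle n) le_rfl) ?_
    rw [← setLIntegral_univ, hY n _ MeasurableSet.univ]
    exact measure_ne_top μ _
  have hDY : ∀ n, infoDiv (ν.withDensity (Y n)) ν = densityDiv ν (ν[f|F n]) := fun n => by
    rw [infoDiv_withDensity_s14 ((hYmeas n).mono (hFle n) le_rfl), densityDiv_congr_ae (hYf n)]
  rw [hμ, infoDiv_withDensity_s14 hρ] at hfin hconv
  simp_rw [hDY] at hconv
  filter_upwards [tendsto_ae_condExp_of_tendsto_densityDiv ⟨F, hFmono, hFle⟩ hf hf0 hfin.ne hconv,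
    ae_all_iff.2 hYf, ae_all_iff.2 hY_lt_top, ae_lt_top hρ hρ_fin]
    with x hx hYx hYx_lt_top hρx
  rw [← ENNReal.tendsto_toReal_iff (fun n => (hYx_lt_top n).ne) hρx.ne]
  simp_rw [hYx]
  exact hx
end

section
/- Let ρ : (0, 1] → ℝ be a non-negative antitone (decreasing) function that is Lebesgue integrable on (0, 1], and suppose ∫₀¹ ρ(s)·max(ln ρ(s), 0) ds = ∞. Then ∫₀¹ (1/x)·(∫₀ˣ ρ(s) ds) dx = ∞; that is, the integral of the maximal function x ↦ (1/x)∫₀ˣ ρ(s) ds of the density ρ is infinite whenever the entropy integral of ρ is infinite. -/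
/-!
By Tonelli, the integral of the maximal function equals `∫₀¹ ρ(s) log(1/s) ds`. As `ρ` is
antitone, `s ρ(s) ≤ ∫₀ˢ ρ ≤ C := ∫₀¹ ρ`, so `log⁺ ρ(s) ≤ log⁺ C + log(1/s)`. Hence the entropy
integral is at most `log⁺ C · ∫₀¹ ρ + ∫₀¹ ρ(s) log(1/s) ds`, whose first term is finite.
-/

open MeasureTheory ENNReal Set

theorem lintegral_inv_Icc {a b : ℝ} (ha : 0 < a) (hab : a ≤ b) :
    ∫⁻ x in Icc a b, (ENNReal.ofReal x)⁻¹ = ENNReal.ofReal (Real.log (b / a)) := by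
  have hpos : ∀ x ∈ Icc a b, 0 < x := fun x hx => ha.trans_le hx.1
  rw [setLIntegral_congr_fun measurableSet_Icc fun x hx => (ofReal_inv_of_pos (hpos x hx)).symm,
    ← ofReal_integral_eq_lintegral_ofReal
      ((continuousOn_inv₀.mono fun x hx => (hpos x hx).ne').integrableOn_Icc)
      ((ae_restrict_iff' measurableSet_Icc).2
        (ae_of_all _ fun x hx => inv_nonneg.2 (hpos x hx).le)),
    integral_Icc_eq_integral_Ioc, ← intervalIntegral.integral_of_le hab,
    integral_inv_of_pos ha (ha.trans_le hab)]

theorem lintegral_inv_mul_setLIntegral_Ioc {f : ℝ → ℝ≥0∞} {b : ℝ}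
    (hf : AEMeasurable f (volume.restrict (Ioc 0 b))) :
    ∫⁻ x in Ioc 0 b, (ENNReal.ofReal x)⁻¹ * ∫⁻ s in Ioc 0 x, f s
      = ∫⁻ s in Ioc 0 b, f s * ENNReal.ofReal (Real.log (b / s)) := by
  set F : ℝ × ℝ → ℝ≥0∞ := {p | p.2 ≤ p.1}.indicator fun p => (ENNReal.ofReal p.1)⁻¹ * f p.2
  have hF : AEMeasurable F ((volume.restrict (Ioc 0 b)).prod (volume.restrict (Ioc 0 b))) :=
    ((measurable_fst.ennreal_ofReal.inv.aemeasurable).mul hf.comp_snd).indicator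
      (measurableSet_le measurable_snd measurable_fst)
  calc ∫⁻ x in Ioc 0 b, (ENNReal.ofReal x)⁻¹ * ∫⁻ s in Ioc 0 x, f s
      = ∫⁻ x in Ioc 0 b, ∫⁻ s in Ioc 0 b, F (x, s) := by
        refine setLIntegral_congr_fun measurableSet_Ioc fun x hx => ?_
        rw [← lintegral_const_mul' _ _ (inv_ne_top.2 (ofReal_pos.2 hx.1).ne'),
          ← Iic_inter_Ioc_of_le hx.2, ← Measure.restrict_restrict measurableSet_Iic,
          ← lintegral_indicator measurableSet_Iic]
        rfl
    _ = ∫⁻ s in Ioc 0 b, ∫⁻ x in Ioc 0 b, F (x, s) := lintegral_lintegral_swap hF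
    _ = ∫⁻ s in Ioc 0 b, f s * ENNReal.ofReal (Real.log (b / s)) := by
        refine setLIntegral_congr_fun measurableSet_Ioc fun s hs => ?_
        have hIcc : Ici s ∩ Ioc 0 b = Icc s b := by
          ext x
          simp only [mem_inter_iff, mem_Ici, mem_Ioc, mem_Icc]
          exact ⟨fun h => ⟨h.1, h.2.2⟩, fun h => ⟨h.1, hs.1.trans_le h.1, h.2⟩⟩
        rw [← lintegral_inv_Icc hs.1 hs.2,
          ← lintegral_const_mul (f := fun x : ℝ => (ENNReal.ofReal x)⁻¹) _ (by fun_prop), ← hIcc,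
          ← Measure.restrict_restrict measurableSet_Ici, ← lintegral_indicator measurableSet_Ici]
        refine lintegral_congr fun x => ?_
        simp only [F, indicator, mem_ofPred_eq, mem_Ici, mul_comm]

theorem mul_le_setIntegral_Ioc_of_antitoneOn {ρ : ℝ → ℝ} {a b : ℝ}
    (hanti : AntitoneOn ρ (Ioc a b)) (hint : IntegrableOn ρ (Ioc a b)) (hab : a ≤ b) :
    (b - a) * ρ b ≤ ∫ t in Ioc a b, ρ t := by
  calc (b - a) * ρ b = ∫ _ in Ioc a b, ρ b := by
        rw [setIntegral_const, Real.volume_real_Ioc_of_le hab, smul_eq_mul]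
    _ ≤ ∫ t in Ioc a b, ρ t :=
        setIntegral_mono_on (integrableOn_const measure_Ioc_lt_top.ne) hint measurableSet_Ioc
          fun t ht => hanti ht ⟨ht.1.trans_le ht.2, le_rfl⟩ ht.2

theorem max_log_le_max_log_add_log_one_div {r s C : ℝ} (hr : 0 ≤ r) (hs : 0 < s) (hs1 : s ≤ 1)
    (hrs : s * r ≤ C) : max (Real.log r) 0 ≤ max (Real.log C) 0 + Real.log (1 / s) := by
  have hrhs : 0 ≤ max (Real.log C) 0 + Real.log (1 / s) :=
    add_nonneg (le_max_right _ _) (Real.log_nonneg ((one_le_div hs).2 hs1))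
  refine max_le ?_ hrhs
  rcases hr.eq_or_lt with rfl | hr
  · rwa [Real.log_zero]
  · have hC : 0 < C := (mul_pos hs hr).trans_le hrs
    calc Real.log r ≤ Real.log (C * (1 / s)) :=
          Real.log_le_log hr (by rw [mul_one_div, le_div_iff₀ hs, mul_comm]; exact hrs)
      _ = Real.log C + Real.log (1 / s) := Real.log_mul hC.ne' (by positivity)
      _ ≤ max (Real.log C) 0 + Real.log (1 / s) := by gcongr; exact le_max_left _ _

/-- If `ρ` is non-negative, antitone and Lebesgue integrable on `(0, 1]` and its
entropy integral `∫₀¹ ρ(s)·max(ln ρ(s), 0) ds` is infinite, then the integral of the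
maximal function `x ↦ (1/x)∫₀ˣ ρ(s) ds` is infinite. -/
theorem maximal_function_integral_infinite_of_entropy_infinite
    (ρ : ℝ → ℝ)
    (hnn : ∀ x ∈ Set.Ioc (0 : ℝ) 1, 0 ≤ ρ x)
    (hanti : AntitoneOn ρ (Set.Ioc (0 : ℝ) 1))
    (hint : IntegrableOn ρ (Set.Ioc (0 : ℝ) 1))
    (hent : ∫⁻ s in Set.Ioc (0 : ℝ) 1,
        ENNReal.ofReal (ρ s * max (Real.log (ρ s)) 0) = ∞) :
    ∫⁻ x in Set.Ioc (0 : ℝ) 1,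
        (ENNReal.ofReal x)⁻¹ * ∫⁻ s in Set.Ioc (0 : ℝ) x, ENNReal.ofReal (ρ s) = ∞ := by
  have hmeas : AEMeasurable (fun s => ENNReal.ofReal (ρ s)) (volume.restrict (Ioc 0 1)) :=
    (aemeasurable_restrict_of_antitoneOn measurableSet_Ioc hanti).ennreal_ofReal
  rw [lintegral_inv_mul_setLIntegral_Ioc hmeas]
  set C := ∫ t in Ioc 0 1, ρ t
  have hρ_le : ∀ s ∈ Ioc (0 : ℝ) 1, s * ρ s ≤ C := fun s hs => by
    have hsub : Ioc 0 s ⊆ Ioc (0 : ℝ) 1 := Ioc_subset_Ioc_right hs.2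
    calc s * ρ s = (s - 0) * ρ s := by rw [sub_zero]
      _ ≤ ∫ t in Ioc 0 s, ρ t :=
          mul_le_setIntegral_Ioc_of_antitoneOn (hanti.mono hsub) (hint.mono_set hsub) hs.1.le
      _ ≤ C := setIntegral_mono_set hint
          ((ae_restrict_iff' measurableSet_Ioc).2 (ae_of_all _ hnn)) hsub.eventuallyLE
  have hent_le : ∫⁻ s in Ioc 0 1, ENNReal.ofReal (ρ s * max (Real.log (ρ s)) 0)
      ≤ (∫⁻ s in Ioc 0 1, ENNReal.ofReal (ρ s) * ENNReal.ofReal (max (Real.log C) 0))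
        + ∫⁻ s in Ioc 0 1, ENNReal.ofReal (ρ s) * ENNReal.ofReal (Real.log (1 / s)) := by
    rw [← lintegral_add_left' (hmeas.mul_const _)]
    refine setLIntegral_mono' measurableSet_Ioc fun s hs => ?_
    rw [← mul_add, ← ofReal_add (le_max_right _ _) (Real.log_nonneg ((one_le_div hs.1).2 hs.2)),
      ← ofReal_mul (hnn s hs)]
    exact ofReal_le_ofReal (mul_le_mul_of_nonneg_left
      (max_log_le_max_log_add_log_one_div (hnn s hs) hs.1 hs.2 (hρ_le s hs)) (hnn s hs))
  have hfin :
      ∫⁻ s in Ioc 0 1, ENNReal.ofReal (ρ s) * ENNReal.ofReal (max (Real.log C) 0) ≠ ∞ := by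
    rw [lintegral_mul_const' _ _ ofReal_ne_top]
    exact mul_ne_top hint.lintegral_lt_top.ne ofReal_ne_top
  rw [hent, top_le_iff] at hent_le
  exact (add_eq_top.1 hent_le).resolve_left hfin
end
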